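/- arXiv:1402.0949 — 2 statements merged into one kernel-verified Lean document; each statement's English description precedes it below -/
import Mathlib

section
/- Let G be a finite simple graph with at least one vertex whose edges are colored with two colors by a function c such that G contains no alternating cycle, i.e., in every cycle of G there are two adjacent edges of the same color. Then G contains a vertex v such that for every connected component C of G − v, all edges of G joining v to vertices of C have the same color. -/
/-- A closed walk `w` is an alternating (properly colored) cycle with respect to the edge
coloring `c` if it is a cycle and every two consecutive edges along it (cyclically, including
the pair consisting of the last and the first edge) receive different colors. -/
def SimpleGraph.IsAlternatingCycle {V : Type*} (G : SimpleGraph V) (c : Sym2 V → Fin 2)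
    {v : V} (w : G.Walk v v) : Prop :=
  w.IsCycle ∧ ∀ i : Fin w.edges.length,
    c (w.edges.get i) ≠
      c (w.edges.get ⟨(i.1 + 1) % w.edges.length, Nat.mod_lt _ ((Nat.zero_le _).trans_lt i.isLt)⟩)

/-!
Split every vertex `v` into two ports `(v, 0)` and `(v, 1)` joined by a matching edge, and let an
edge of colour `i` join the `i`-ports of its ends. A cycle of this split graph alternating with
respect to the perfect matching projects to an alternating cycle of `G`, so by Kotzig's theorem
some matching edge `(v, 0) (v, 1)` is a bridge of the split graph. A path in `G - v` between two
neighbours of `v` reached through edges of different colours would bypass that bridge.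

Kotzig's theorem (a graph with a perfect matching and no alternating cycle has a bridge in the
matching) is proved by induction on the number of non-isolated vertices. An alternating path that
cannot be extended ends at a vertex whose matching edge is a bridge, or closes an alternating cycle,
or closes a blossom. Contracting the blossom onto its base keeps the matching and creates no
alternating cycle, and a matching edge that is a bridge after the contraction was one before.
-/

theorem Function.Involutive.eq_apply_of_sym2_eq {α : Type*} {f : α → α}
    (hf : Function.Involutive f) {a b z : α} (h : s(a, b) = s(z, f z)) : b = f a := by
  rcases Sym2.eq_iff.1 h with ⟨rfl, rfl⟩ | ⟨rfl, rfl⟩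
  exacts [rfl, (hf b).symm]

theorem List.apply_mem_append_map_iff {α : Type*} {f : α → α} (hf : Function.Involutive f)
    {l : List α} {x : α} : f x ∈ l ++ l.map f ↔ x ∈ l ++ l.map f := by
  simp only [List.mem_append, List.mem_map]
  constructor
  · rintro (h | ⟨a, ha, hax⟩)
    · exact Or.inr ⟨f x, h, hf x⟩
    · exact Or.inl (hf.injective hax ▸ ha)
  · rintro (h | ⟨a, ha, rfl⟩)
    · exact Or.inr ⟨x, h, rfl⟩
    · exact Or.inl ((hf a).symm ▸ ha)

theorem Fin.val_add_one_eq_mod {k : ℕ} [NeZero k] (j : Fin k) :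
    ((j + 1 : Fin k) : ℕ) = (j + 1) % k := by
  rw [Fin.val_add, Fin.val_one', Nat.add_mod_mod]

theorem fin_two_eq_or_eq_add_one (i j : Fin 2) : j = i ∨ j = i + 1 := by
  revert i j; decide

theorem fin_two_add_one_ne_self (i : Fin 2) : i + 1 ≠ i := by
  revert i; decide

namespace SimpleGraph

theorem Reachable.map_of_forall_adj {V V' : Type*} {G : SimpleGraph V} {G' : SimpleGraph V'}
    {f : V → V'} (h : ∀ a b, G.Adj a b → G'.Reachable (f a) (f b)) {a b : V}
    (hab : G.Reachable a b) : G'.Reachable (f a) (f b) := by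
  rw [reachable_iff_reflTransGen] at hab ⊢
  exact Relation.ReflTransGen.lift' f (fun a b h' => (reachable_iff_reflTransGen _ _).1 (h a b h'))
    _ _ hab

theorem isBridge_of_forall_adj_eq {V : Type*} {G : SimpleGraph V} {u v : V} (huv : u ≠ v)
    (h : ∀ w, G.Adj u w → w = v) : G.IsBridge s(v, u) := by
  rw [isBridge_iff, reachable_comm]
  rintro ⟨_ | ⟨hadj, _⟩⟩
  · exact huv rfl
  · rw [deleteEdges_adj, Set.mem_singleton_iff] at hadj
    exact hadj.2 (by rw [h _ hadj.1, Sym2.eq_swap])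

section AlternatingPaths

variable {W : Type*} (H : SimpleGraph W) (m : W → W)

/-- Alternating paths with respect to the matching `v ↦ m v`: the list `[u₀, …, uₖ]` stands for
the path `u₀, m u₀, u₁, m u₁, …, uₖ, m uₖ`, whose edges `m uᵢ uᵢ₊₁` leave the matching. -/
def IsAltPath (p : List W) : Prop :=
  p.IsChain (fun a b => H.Adj (m a) b) ∧ (p ++ p.map m).Nodup

/-- Closed up by the edge `m uₖ u₀`. -/
def IsAltCycle (p : List W) : Prop :=
  H.IsAltPath m p ∧ 2 ≤ p.length ∧ ∀ a ∈ p.getLast?, ∀ b ∈ p.head?, H.Adj (m a) b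

/-- The alternating path `q ++ [y]` closed by an edge from the head of `q` to `y` (instead of to
`m y`): an odd cycle through the base `y`, alternating except at `y`. -/
def IsBlossom (q : List W) (y : W) : Prop :=
  q ≠ [] ∧ H.IsAltPath m (q ++ [y]) ∧ ∀ a ∈ q.head?, H.Adj a y

variable {H m}

namespace IsAltPath

theorem append {p q : List W} (hp : H.IsAltPath m p) (hq : H.IsAltPath m q)
    (hpq : ∀ a ∈ p.getLast?, ∀ b ∈ q.head?, H.Adj (m a) b)
    (hdisj : ∀ x ∈ p ++ p.map m, x ∉ q ++ q.map m) : H.IsAltPath m (p ++ q) := by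
  refine ⟨hp.1.append hq.1 hpq, ?_⟩
  have hperm : (p ++ q ++ (p ++ q).map m).Perm ((p ++ p.map m) ++ (q ++ q.map m)) := by
    simp only [List.map_append, List.append_assoc]
    exact List.Perm.append_left p (List.perm_append_comm_assoc _ _ _)
  exact hperm.nodup_iff.2
    (List.nodup_append.2 ⟨hp.2, hq.2, fun x hx y hy hxy => hdisj x hx (hxy ▸ hy)⟩)

theorem left {p q : List W} (h : H.IsAltPath m (p ++ q)) : H.IsAltPath m p :=
  ⟨h.1.left_of_append, h.2.sublist (by simp)⟩

theorem right {p q : List W} (h : H.IsAltPath m (p ++ q)) : H.IsAltPath m q :=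
  ⟨h.1.right_of_append, h.2.sublist (by simp)⟩

theorem reverse (hm : Function.Involutive m) {p : List W} (h : H.IsAltPath m p) :
    H.IsAltPath m (p.map m).reverse := by
  refine ⟨?_, ?_⟩
  · rw [List.isChain_reverse, List.isChain_map]
    exact h.1.imp fun a b hab => by rw [hm]; exact hab.symm
  · have : (p.map m).reverse ++ ((p.map m).reverse).map m = (p ++ p.map m).reverse := by
      simp [List.map_reverse, List.map_map, hm.comp_self]
    rw [this, List.nodup_reverse]
    exact h.2

theorem imp {H' : SimpleGraph W} {l : List W} (h : H.IsAltPath m l)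
    (himp : ∀ a ∈ l, ∀ b ∈ l, H.Adj (m a) b → H'.Adj (m a) b) : H'.IsAltPath m l :=
  ⟨h.1.imp_of_mem_imp fun a b ha hb => himp a ha b hb, h.2⟩

theorem cons_distinct {a : W} {l : List W} (h : H.IsAltPath m (a :: l)) :
    m a ≠ a ∧ ∀ x ∈ l ++ l.map m, x ≠ a ∧ x ≠ m a := by
  have hperm : (a :: l ++ (a :: l).map m).Perm (a :: m a :: (l ++ l.map m)) := by
    simp only [List.map_cons, List.cons_append, List.perm_cons]
    exact List.perm_middle
  have := hperm.nodup_iff.1 h.2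
  simp only [List.nodup_cons, List.mem_cons, not_or] at this
  exact ⟨Ne.symm this.1.1, fun x hx => ⟨fun h => this.1.2 (h ▸ hx), fun h => this.2.1 (h ▸ hx)⟩⟩

theorem get_injective {C : List W} (h : H.IsAltPath m C) : Function.Injective C.get :=
  List.nodup_iff_injective_get.1 (h.2.sublist (List.sublist_append_left _ _))

theorem get_ne_partner {C : List W} (h : H.IsAltPath m C) (i j : Fin C.length) :
    C.get i ≠ m (C.get j) :=
  (List.nodup_append.1 h.2).2.2 _ (List.get_mem _ _) _ (List.mem_map_of_mem (List.get_mem _ _))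

theorem concat (hm : Function.Involutive m) (hM : ∀ v w, H.Adj v w → H.Adj v (m v))
    {p : List W} {x w : W} (hp : H.IsAltPath m (p ++ [x])) (hxw : H.Adj (m x) w)
    (hw : w ∉ p ++ [x] ++ (p ++ [x]).map m) : H.IsAltPath m (p ++ [x] ++ [w]) := by
  refine hp.append ⟨List.isChain_singleton w, ?_⟩ (by simpa using hxw) ?_
  · simpa using (hM w _ hxw.symm).ne
  · intro y hy hyw
    simp only [List.map_cons, List.map_nil, List.cons_append, List.nil_append, List.mem_cons,
      List.not_mem_nil, or_false] at hyw
    rcases hyw with rfl | rfl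
    · exact hw hy
    · exact hw ((List.apply_mem_append_map_iff hm).1 hy)

theorem altCycle_or_blossom (hm : Function.Involutive m) {p : List W} {x w : W}
    (hp : H.IsAltPath m (p ++ [x])) (hxw : H.Adj (m x) w) (hwx : w ≠ x)
    (hw : w ∈ p ++ [x] ++ (p ++ [x]).map m) :
    (∃ C, H.IsAltCycle m C) ∨ ∃ q y, H.IsBlossom m q y := by
  rcases List.mem_append.1 hw with hw | hw
  · left
    obtain ⟨s, t, hst⟩ := List.append_of_mem hw
    have hlast : (w :: t).getLast? = some x := by
      simpa [List.getLast?_append] using (congrArg List.getLast? hst).symm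
    have ht : t ≠ [] := by
      rintro rfl
      simp only [List.getLast?_singleton, Option.some.injEq] at hlast
      exact hwx hlast
    refine ⟨w :: t, (hst ▸ hp).right, by simpa [Nat.one_le_iff_ne_zero] using ht, ?_⟩
    simp only [hlast, List.head?_cons, Option.mem_def, Option.some.injEq]
    rintro _ rfl _ rfl
    exact hxw
  · right
    obtain ⟨u, hu, rfl⟩ := List.mem_map.1 hw
    obtain ⟨s, t, hst⟩ := List.append_of_mem hu
    have hlast : (u :: t).getLast? = some x := by
      simpa [List.getLast?_append] using (congrArg List.getLast? hst).symm
    have ht : t ≠ [] := by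
      rintro rfl
      simp only [List.getLast?_singleton, Option.some.injEq] at hlast
      exact hxw.ne (hlast ▸ rfl)
    refine ⟨(t.map m).reverse, m u, by simpa using ht, ?_, ?_⟩
    · have := ((hst ▸ hp).right (p := s)).reverse hm
      rwa [List.map_cons, List.reverse_cons] at this
    · simp only [List.head?_reverse, List.getLast?_map, Option.mem_def, Option.map_eq_some_iff]
      rintro _ ⟨a, ha, rfl⟩
      rw [List.getLast?_cons, ha] at hlast
      simp only [Option.getD_some, Option.some.injEq] at hlast
      exact hlast ▸ hxw

end IsAltPath

namespace IsAltCycle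

theorem imp {H' : SimpleGraph W} {l : List W} (h : H.IsAltCycle m l)
    (himp : ∀ a ∈ l, ∀ b ∈ l, H.Adj (m a) b → H'.Adj (m a) b) : H'.IsAltCycle m l :=
  ⟨h.1.imp himp, h.2.1, fun a ha b hb =>
    himp a (List.mem_of_getLast? ha) b (List.mem_of_mem_head? hb) (h.2.2 a ha b hb)⟩

theorem rotate {p q : List W} (h : H.IsAltCycle m (p ++ q)) : H.IsAltCycle m (q ++ p) := by
  rcases eq_or_ne p [] with rfl | hp
  · simpa using h
  rcases eq_or_ne q [] with rfl | hq
  · simpa using h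
  obtain ⟨⟨hc, hn⟩, hlen, hcl⟩ := h
  rw [List.isChain_append] at hc
  refine ⟨⟨hc.2.1.append hc.1 ?_, ?_⟩, by simpa [add_comm] using hlen, ?_⟩
  · simpa [List.getLast?_append, List.head?_append, hp, hq] using hcl
  · refine (List.Perm.nodup_iff ?_).1 hn
    simp only [List.map_append]
    exact List.perm_append_comm.append List.perm_append_comm
  · simpa [List.getLast?_append, List.head?_append, hp, hq] using hc.2.2

theorem reverse (hm : Function.Involutive m) {p : List W} (h : H.IsAltCycle m p) :
    H.IsAltCycle m (p.map m).reverse := by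
  refine ⟨h.1.reverse hm, by simpa using h.2.1, ?_⟩
  simp only [List.getLast?_reverse, List.head?_reverse, List.head?_map, List.getLast?_map,
    Option.mem_def, Option.map_eq_some_iff]
  rintro _ ⟨a, ha, rfl⟩ _ ⟨b, hb, rfl⟩
  rw [hm]
  exact (h.2.2 b hb a ha).symm

theorem exists_adj {C : List W} (h : H.IsAltCycle m C) {x : W} (hx : x ∈ C) :
    ∃ b, H.Adj (m x) b := by
  obtain ⟨s, t, rfl⟩ := List.append_of_mem hx
  rcases t with _ | ⟨b, t⟩
  · cases s with
    | nil => exact ⟨x, h.2.2 x (by simp) x (by simp)⟩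
    | cons a s => exact ⟨a, h.2.2 x (by rw [List.getLast?_append]; simp) a (by simp)⟩
  · have := (List.isChain_append.1 h.1.1).2.1
    exact ⟨b, this.rel⟩

theorem adj_get {C : List W} (h : H.IsAltCycle m C) [NeZero C.length]
    (j : Fin C.length) : H.Adj (m (C.get j)) (C.get (j + 1)) := by
  obtain ⟨j, hj⟩ := j
  simp only [List.get_eq_getElem, Fin.val_add_one_eq_mod]
  by_cases hlast : j + 1 < C.length
  · simp only [Nat.mod_eq_of_lt hlast]
    exact List.isChain_iff_getElem.1 h.1.1 j hlast
  · obtain rfl : j = C.length - 1 := by omega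
    simp only [Nat.sub_add_cancel (Nat.one_le_of_lt hj), Nat.mod_self]
    exact h.2.2 _ (by simp [List.getLast?_eq_getElem?, hj]) _ (by simp [List.head?_eq_getElem?])

end IsAltCycle

theorem exists_altPath_not_extendable [Finite W] (hm : Function.Involutive m)
    (hM : ∀ v w, H.Adj v w → H.Adj v (m v)) {v : W} (hv : H.Adj v (m v)) :
    ∃ p x, H.IsAltPath m (p ++ [x]) ∧ H.Adj x (m x) ∧
      ∀ w, H.Adj (m x) w → w ∈ p ++ [x] ++ (p ++ [x]).map m := by
  have := Fintype.ofFinite W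
  by_contra! hcon
  have hlong : ∀ n, ∃ p x, H.IsAltPath m (p ++ [x]) ∧ H.Adj x (m x) ∧ n ≤ p.length := by
    intro n
    induction n with
    | zero => exact ⟨[], v, ⟨List.isChain_singleton v, by simpa using hv.ne⟩, hv, le_rfl⟩
    | succ n ih =>
      obtain ⟨p, x, hp, hx, hn⟩ := ih
      obtain ⟨w, hxw, hw⟩ := hcon p x hp hx
      exact ⟨p ++ [x], w, hp.concat hm hM hxw hw, hM w _ hxw.symm,
        by simp only [List.length_append, List.length_singleton]; omega⟩
  obtain ⟨p, x, hp, -, hn⟩ := hlong (Fintype.card W)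
  have := (hp.2.sublist (List.sublist_append_left _ _)).length_le_card
  simp only [List.length_append, List.length_singleton] at this
  omega

section Blossom

variable {q : List W} {y : W}

local notation "S" => q ++ q.map m

namespace IsBlossom

theorem base_not_mem (hb : H.IsBlossom m q y) : y ∉ S ∧ m y ∉ S := by
  have := hb.2.1.2
  simp only [List.map_append, List.map_cons, List.map_nil, List.nodup_append, List.mem_append,
    List.mem_map, List.mem_singleton] at this ⊢
  grind

theorem base_mem_support (hb : H.IsBlossom m q y) : y ∈ H.support := by
  obtain ⟨a, q', rfl⟩ := List.exists_cons_of_ne_nil hb.1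
  exact ⟨a, (hb.2.2 a rfl).symm⟩

theorem exists_route (hm : Function.Involutive m) (hb : H.IsBlossom m q y) {w : W}
    (hw : w = y ∨ w ∈ S) :
    ∃ ρ, H.IsAltPath m (ρ ++ [y]) ∧ (ρ ++ [y]).head? = some w ∧ ∀ x ∈ ρ ++ ρ.map m, x ∈ S := by
  have hbase := hb.base_not_mem
  obtain ⟨-, hpath, hclose⟩ := hb
  have hmm : ∀ a, m (m a) = a := hm
  rcases hw with rfl | hw
  · exact ⟨[], hpath.right, rfl, by simp⟩
  rcases List.mem_append.1 hw with hw | hw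
  · obtain ⟨s, t, rfl⟩ := List.append_of_mem hw
    refine ⟨w :: t, ?_, rfl, ?_⟩
    · have hpath' : H.IsAltPath m (s ++ (w :: t ++ [y])) := by simpa using hpath
      simpa using hpath'.right
    · intro x hx
      simp only [List.mem_append, List.mem_map, List.mem_cons] at hx ⊢
      grind
  · obtain ⟨u, hu, rfl⟩ := List.mem_map.1 hw
    obtain ⟨s, t, rfl⟩ := List.append_of_mem hu
    have hsub : ∀ x ∈ ((s ++ [u]).map m).reverse ++ ((s ++ [u]).map m).reverse.map m,
        x ∈ s ++ u :: t ++ (s ++ u :: t).map m := by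
      intro x hx
      simp only [List.mem_append, List.mem_map, List.mem_cons, List.mem_reverse] at hx ⊢
      grind
    refine ⟨_, ?_, by simp, hsub⟩
    have hpath' : H.IsAltPath m ((s ++ [u]) ++ (t ++ [y])) := by simpa using hpath
    refine (hpath'.left.reverse hm).append hpath.right ?_ fun x hx hy => ?_
    · simp only [List.getLast?_reverse, List.head?_map, Option.mem_def, Option.map_eq_some_iff,
        List.head?_cons]
      rintro _ ⟨a, ha, rfl⟩ b ⟨⟩
      rw [hm]
      exact hclose a (by cases s <;> simp_all)
    · simp only [List.map_cons, List.map_nil, List.cons_append, List.nil_append, List.mem_cons,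
        List.not_mem_nil, or_false] at hy
      rcases hy with rfl | rfl
      · exact hbase.1 (hsub x hx)
      · exact hbase.2 (hsub _ hx)

theorem not_adj_base_partner (hm : Function.Involutive m) (hb : H.IsBlossom m q y)
    (hnc : ∀ C, ¬ H.IsAltCycle m C) {a : W} (ha : a ∈ S) : ¬ H.Adj a (m y) := by
  intro hadj
  obtain ⟨ρ, hρ, hhead, -⟩ := hb.exists_route hm (Or.inr ha)
  have hρne : ρ ≠ [] := by
    rintro rfl
    simp only [List.nil_append, List.head?_cons, Option.some.injEq] at hhead
    exact hb.base_not_mem.1 (hhead ▸ ha)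
  refine hnc (ρ ++ [y]) ⟨hρ, ?_, ?_⟩
  · simpa [Nat.one_le_iff_ne_zero] using hρne
  · simp only [List.getLast?_append, List.getLast?_singleton, Option.some_or, hhead,
      Option.mem_def, Option.some.injEq]
    rintro _ rfl _ rfl
    exact hadj.symm

end IsBlossom

variable [DecidableEq W]

def collapse (T : List W) (y x : W) : W := if x ∈ T then y else x

variable (H m) in
def contractBlossom (q : List W) (y : W) : SimpleGraph W := H.map (collapse (q ++ q.map m) y)

theorem collapse_of_not_mem {T : List W} {x : W} (hx : x ∉ T) : collapse T y x = x := if_neg hx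

theorem collapse_not_mem {T : List W} (hy : y ∉ T) (x : W) : collapse T y x ∉ T := by
  unfold collapse; split_ifs with h <;> assumption

theorem collapse_eq_iff {T : List W} {a x : W} (ha : a ∉ T) (hay : a ≠ y) :
    collapse T y x = a ↔ x = a := by
  unfold collapse
  split_ifs with h
  · exact ⟨fun h' => absurd h' hay.symm, fun h' => absurd (h' ▸ h) ha⟩
  · rfl

theorem contractBlossom_adj_of_adj {a b : W} (hab : H.Adj a b) (ha : a ∉ S) (hb : b ∉ S) :
    (H.contractBlossom m q y).Adj a b := by
  have := map_adj_apply' (f := collapse S y) hab (by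
    rw [collapse_of_not_mem ha, collapse_of_not_mem hb]; exact hab.ne)
  rwa [collapse_of_not_mem ha, collapse_of_not_mem hb] at this

namespace IsBlossom

variable (hb : H.IsBlossom m q y)
include hb

theorem not_mem_of_contractBlossom_adj {a b : W} (h : (H.contractBlossom m q y).Adj a b) :
    a ∉ S := by
  obtain ⟨-, a₀, b₀, -, rfl, -⟩ := h
  exact collapse_not_mem hb.base_not_mem.1 _

theorem adj_of_contractBlossom_adj {a b : W} (h : (H.contractBlossom m q y).Adj a b)
    (ha : a ≠ y) (hb' : b ≠ y) : H.Adj a b := by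
  have haS := hb.not_mem_of_contractBlossom_adj h
  have hbS := hb.not_mem_of_contractBlossom_adj h.symm
  obtain ⟨-, a₀, b₀, hab, ha₀, hb₀⟩ := h
  rwa [(collapse_eq_iff haS ha).1 ha₀, (collapse_eq_iff hbS hb').1 hb₀] at hab

theorem exists_adj_of_contractBlossom_adj_base {a : W} (h : (H.contractBlossom m q y).Adj a y)
    (ha : a ≠ y) : ∃ w, (w = y ∨ w ∈ S) ∧ H.Adj a w := by
  have haS := hb.not_mem_of_contractBlossom_adj h
  obtain ⟨-, a₀, b₀, hab, ha₀, hb₀⟩ := h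
  refine ⟨b₀, ?_, (collapse_eq_iff haS ha).1 ha₀ ▸ hab⟩
  unfold collapse at hb₀
  split_ifs at hb₀ with h
  exacts [Or.inr h, Or.inl hb₀]

theorem support_contractBlossom_ssubset :
    (H.contractBlossom m q y).support ⊂ H.support := by
  refine (Set.ssubset_iff_of_subset ?_).2 ?_
  · rintro _ ⟨b, -, a₀, b₀, hab, rfl, -⟩
    unfold collapse
    split_ifs
    exacts [hb.base_mem_support, ⟨b₀, hab⟩]
  · obtain ⟨a, q', rfl⟩ := List.exists_cons_of_ne_nil hb.1
    exact ⟨a, ⟨y, hb.2.2 a rfl⟩, fun ⟨b, hab⟩ => hb.not_mem_of_contractBlossom_adj hab (by simp)⟩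

theorem contractBlossom_adj_partner (hm : Function.Involutive m)
    (hM : ∀ v w, H.Adj v w → H.Adj v (m v)) {v w : W} (h : (H.contractBlossom m q y).Adj v w) :
    (H.contractBlossom m q y).Adj v (m v) := by
  obtain ⟨u, hu⟩ := hb.support_contractBlossom_ssubset.1 ⟨w, h⟩
  have hvS := hb.not_mem_of_contractBlossom_adj h
  exact contractBlossom_adj_of_adj (hM v u hu) hvS ((List.apply_mem_append_map_iff hm).not.2 hvS)

theorem contractBlossom_adj_base_partner (hM : ∀ v w, H.Adj v w → H.Adj v (m v)) :
    (H.contractBlossom m q y).Adj y (m y) := by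
  obtain ⟨u, hu⟩ := hb.base_mem_support
  exact contractBlossom_adj_of_adj (hM y u hu) hb.base_not_mem.1 hb.base_not_mem.2

theorem not_mem_of_isAltCycle_contractBlossom (hm : Function.Involutive m) {C : List W}
    (hC : (H.contractBlossom m q y).IsAltCycle m C) : ∀ x ∈ C ++ C.map m, x ∉ S := by
  intro x hx
  have key : ∀ u ∈ C, u ∉ S := fun u hu => by
    obtain ⟨b, hub⟩ := hC.exists_adj hu
    exact (List.apply_mem_append_map_iff hm).not.1 (hb.not_mem_of_contractBlossom_adj hub)
  rcases List.mem_append.1 hx with hx | hx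
  · exact key x hx
  · obtain ⟨u, hu, rfl⟩ := List.mem_map.1 hx
    exact (List.apply_mem_append_map_iff hm).not.2 (key u hu)

theorem not_isAltCycle_contractBlossom_cons (hm : Function.Involutive m)
    (hnc : ∀ C, ¬ H.IsAltCycle m C) (l : List W) :
    ¬ (H.contractBlossom m q y).IsAltCycle m (y :: l) := by
  intro hC
  have hout := hb.not_mem_of_isAltCycle_contractBlossom hm hC
  obtain ⟨hpath, hlen, hclose⟩ := hC
  obtain ⟨hmy, hfar⟩ := hpath.cons_distinct
  obtain ⟨l, z, rfl⟩ : ∃ l' z, l = l' ++ [z] :=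
    ⟨l.dropLast, l.getLast (by rintro rfl; simp at hlen), (List.dropLast_append_getLast _).symm⟩
  have hl : H.IsAltPath m (l ++ [z]) := (hpath.right (p := [y])).imp fun a ha b hb' h =>
    hb.adj_of_contractBlossom_adj h
      (hfar (m a) (List.mem_append_right _ (List.mem_map_of_mem ha))).1
      (hfar b (List.mem_append_left _ hb')).1
  obtain ⟨w, hw, hzw⟩ := hb.exists_adj_of_contractBlossom_adj_base
    (hclose z (by simp [List.getLast?_cons]) y rfl) (hfar (m z) (by simp)).1
  -- the cycle returns to `y` along an edge `m z w` of `H` with `w` in the blossom; in `H`, go on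
  -- from `w` to `y` inside the blossom instead
  obtain ⟨ρ, hρ, hhead, hρS⟩ := hb.exists_route hm hw
  refine hnc (ρ ++ [y] ++ (l ++ [z])) ⟨hρ.append hl ?_ ?_, ?_, ?_⟩
  · simp only [List.getLast?_append, List.getLast?_singleton, Option.some_or, Option.mem_def,
      Option.some.injEq]
    rintro _ rfl b hb'
    exact hb.adj_of_contractBlossom_adj ((List.isChain_cons.1 hpath.1).1 b hb') hmy
      (hfar b (List.mem_append_left _ (List.mem_of_mem_head? hb'))).1
  · intro x hx hxl
    have hxS : x ∉ S := hout x (by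
      simp only [List.map_cons, List.cons_append, List.mem_cons, List.mem_append] at hxl ⊢; tauto)
    simp only [List.map_append, List.map_cons, List.map_nil, List.mem_append, List.mem_cons,
      List.not_mem_nil, or_false] at hx
    rcases hx with (hx | rfl) | (hx | rfl)
    · exact hxS (hρS x (List.mem_append_left _ hx))
    · exact (hfar x hxl).1 rfl
    · exact hxS (hρS x (List.mem_append_right _ hx))
    · exact (hfar _ hxl).2 rfl
  · simp only [List.length_append, List.length_singleton]
    omega
  · rw [List.head?_append, hhead]
    simp only [List.getLast?_append, List.getLast?_singleton, Option.some_or, Option.mem_def,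
      Option.some.injEq]
    rintro _ rfl _ rfl
    exact hzw

theorem not_isAltCycle_contractBlossom (hm : Function.Involutive m)
    (hnc : ∀ C, ¬ H.IsAltCycle m C) (C : List W) : ¬ (H.contractBlossom m q y).IsAltCycle m C := by
  intro hC
  by_cases hy : y ∈ C ++ C.map m
  · obtain ⟨C', hC', hyC'⟩ : ∃ C', (H.contractBlossom m q y).IsAltCycle m C' ∧ y ∈ C' := by
      rcases List.mem_append.1 hy with h | h
      exacts [⟨C, hC, h⟩, ⟨_, hC.reverse hm, List.mem_reverse.2 h⟩]
    obtain ⟨s, t, rfl⟩ := List.append_of_mem hyC'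
    exact hb.not_isAltCycle_contractBlossom_cons hm hnc (t ++ s) (by simpa using hC'.rotate)
  · refine hnc C (hC.imp fun a ha b hb' h => hb.adj_of_contractBlossom_adj h ?_ ?_)
    · rintro hay
      exact hy (List.mem_append_right _ (hay ▸ List.mem_map_of_mem ha))
    · rintro rfl
      exact hy (List.mem_append_left _ hb')

theorem isBridge_of_contractBlossom (hm : Function.Involutive m) (hnc : ∀ C, ¬ H.IsAltCycle m C)
    {z : W} (hz : (H.contractBlossom m q y).Adj z (m z))
    (hbr : (H.contractBlossom m q y).IsBridge s(z, m z)) : H.IsBridge s(z, m z) := by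
  have hstep : ∀ a b, (H.deleteEdges {s(z, m z)}).Adj a b →
      ((H.contractBlossom m q y).deleteEdges {s(z, m z)}).Reachable
        (collapse S y a) (collapse S y b) := by
    intro a b hab
    rw [deleteEdges_adj, Set.mem_singleton_iff] at hab
    by_cases hsame : collapse S y a = collapse S y b
    · rw [hsame]
    refine Adj.reachable ((deleteEdges_adj ..).2 ⟨map_adj_apply' hab.1 hsame, ?_⟩)
    rw [Set.mem_singleton_iff]
    -- an edge from the blossom to `m y` would close an alternating cycle
    have hend : ∀ {a b}, H.Adj a b → a ∈ S → s(y, b) ≠ s(z, m z) := fun hab ha h =>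
      hb.not_adj_base_partner hm hnc ha (by rwa [hm.eq_apply_of_sym2_eq h] at hab)
    by_cases ha : a ∈ S <;> by_cases hb' : b ∈ S <;>
      simp only [collapse, ha, hb', if_true, if_false] at hsame ⊢
    · exact absurd trivial hsame
    · exact hend hab.1 ha
    · exact Sym2.eq_swap ▸ hend hab.1.symm hb'
    · exact hab.2
  rw [isBridge_iff] at hbr ⊢
  intro hreach
  have := hreach.map_of_forall_adj hstep
  rw [collapse_of_not_mem (hb.not_mem_of_contractBlossom_adj hz),
    collapse_of_not_mem (hb.not_mem_of_contractBlossom_adj hz.symm)] at this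
  exact hbr this

end IsBlossom

end Blossom

theorem exists_isBridge_of_forall_not_isAltCycle [Finite W] (hm : Function.Involutive m)
    (hM : ∀ v w, H.Adj v w → H.Adj v (m v)) (hnc : ∀ C, ¬ H.IsAltCycle m C) {v : W}
    (hv : H.Adj v (m v)) : ∃ z, H.Adj z (m z) ∧ H.IsBridge s(z, m z) := by
  classical
  induction hn : H.support.ncard using Nat.strong_induction_on generalizing H v with
  | _ n ih =>
  obtain ⟨p, x, hp, hx, hmax⟩ := exists_altPath_not_extendable hm hM hv
  by_cases hleaf : ∀ w, H.Adj (m x) w → w = x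
  · exact ⟨x, hx, isBridge_of_forall_adj_eq hx.ne.symm hleaf⟩
  push Not at hleaf
  obtain ⟨w, hxw, hwx⟩ := hleaf
  rcases hp.altCycle_or_blossom hm hxw hwx (hmax w hxw) with ⟨C, hC⟩ | ⟨q, y, hb⟩
  · exact absurd hC (hnc C)
  obtain ⟨z, hz, hbr⟩ := ih _ (hn ▸ Set.ncard_lt_ncard hb.support_contractBlossom_ssubset)
    (fun _ _ => hb.contractBlossom_adj_partner hm hM) (hb.not_isAltCycle_contractBlossom hm hnc)
    (hb.contractBlossom_adj_base_partner hM) rfl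
  obtain ⟨u, hu⟩ := hb.support_contractBlossom_ssubset.1 ⟨_, hz⟩
  exact ⟨z, hM z u hu, hb.isBridge_of_contractBlossom hm hnc hz hbr⟩

end AlternatingPaths

section ColorSplit

variable {V : Type*} {G : SimpleGraph V} {c : Sym2 V → Fin 2}

theorem exists_walk_of_forall_adj_add_one {k : ℕ} [NeZero k] (f : Fin k → V)
    (hadj : ∀ j, G.Adj (f j) (f (j + 1))) :
    ∃ w : G.Walk (f 0) (f 0), w.edges = List.ofFn (fun j => s(f j, f (j + 1))) ∧
      w.support.tail = List.ofFn (fun j => f (j + 1)) := by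
  let d : Fin k → G.Dart := fun j => ⟨(f j, f (j + 1)), hadj j⟩
  have hk : 0 < k := Nat.pos_of_ne_zero (NeZero.ne k)
  have hne : List.ofFn d ≠ [] := by simp only [ne_eq, List.ofFn_eq_nil_iff]; omega
  have hchain : (List.ofFn d).IsChain G.DartAdj := by
    refine List.isChain_iff_getElem.2 fun i hi => ?_
    simp only [List.length_ofFn] at hi
    simp only [List.getElem_ofFn, DartAdj, d]
    refine congrArg f (Fin.ext ?_)
    rw [Fin.val_add_one_eq_mod, Nat.mod_eq_of_lt hi]
  have hv₀ : ((List.ofFn d).head hne).fst = f 0 := by simp [List.head_ofFn, d]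
  have hv₁ : ((List.ofFn d).getLast hne).snd = f 0 := by
    simp only [List.getLast_ofFn, d]
    refine congrArg f (Fin.ext ?_)
    rw [Fin.val_add_one_eq_mod, Nat.sub_add_cancel hk, Nat.mod_self, Fin.val_zero]
  refine ⟨(Walk.ofDarts (List.ofFn d) hne hchain).copy hv₀ hv₁, ?_, ?_⟩
  · simp only [Walk.edges_copy, Walk.edges_ofDarts, List.map_ofFn]
    rfl
  · rw [← Walk.map_snd_darts]
    simp only [Walk.darts_copy, Walk.darts_ofDarts, List.map_ofFn]
    rfl

theorem exists_isAlternatingCycle_of_fin {k : ℕ} [NeZero k] (f : Fin k → V)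
    (hf : Function.Injective f) (hadj : ∀ j, G.Adj (f j) (f (j + 1)))
    (hcol : ∀ j, c s(f j, f (j + 1)) ≠ c s(f (j + 1), f (j + 1 + 1))) :
    ∃ v, ∃ w : G.Walk v v, G.IsAlternatingCycle c w := by
  obtain ⟨w, hedges, hsupp⟩ := exists_walk_of_forall_adj_add_one f hadj
  have hlen : w.edges.length = k := by rw [hedges, List.length_ofFn]
  -- an edge met twice would force `k = 2`, where `hcol` fails
  have hinj : Function.Injective fun j => s(f j, f (j + 1)) := by
    intro i j hij
    rcases Sym2.eq_iff.1 hij with ⟨h, -⟩ | ⟨hi, hj⟩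
    · exact hf h
    · cases hcol j (by rw [← hf hi, hf hj, Sym2.eq_swap])
  have hcyc : w.IsCycle := by
    refine (Walk.isCycle_def w).2 ⟨?_, fun h => ?_, ?_⟩
    · rw [Walk.isTrail_def, hedges]
      exact List.nodup_ofFn.2 hinj
    · have := NeZero.ne k
      simp [← hlen, h] at this
    · rw [hsupp]
      exact List.nodup_ofFn.2 (hf.comp (add_left_injective 1))
  refine ⟨f 0, w, hcyc, fun ⟨i, hi⟩ => ?_⟩
  have hget : ∀ j (hj : j < w.edges.length),
      w.edges.get ⟨j, hj⟩ = s(f ⟨j, hlen ▸ hj⟩, f (⟨j, hlen ▸ hj⟩ + 1)) := by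
    simp [hedges]
  have hsucc : ∀ h, (⟨(i + 1) % w.edges.length, h⟩ : Fin k) = ⟨i, hlen ▸ hi⟩ + 1 := fun _ =>
    Fin.ext (by simp only [Fin.val_add_one_eq_mod, hlen])
  rw [hget, hget, hsucc]
  exact hcol _

def portSwap (p : V × Fin 2) : V × Fin 2 := (p.1, p.2 + 1)

variable (G c) in
def colorSplit : SimpleGraph (V × Fin 2) where
  Adj p q := (p.1 = q.1 ∧ p.2 ≠ q.2) ∨ (G.Adj p.1 q.1 ∧ p.2 = q.2 ∧ c s(p.1, q.1) = p.2)
  symm := ⟨fun p q => by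
    rintro (⟨h₁, h₂⟩ | ⟨h₁, h₂, h₃⟩)
    · exact Or.inl ⟨h₁.symm, h₂.symm⟩
    · exact Or.inr ⟨h₁.symm, h₂.symm, by rw [Sym2.eq_swap, h₃, h₂]⟩⟩
  loopless := ⟨fun p h => by rcases h with ⟨-, h⟩ | ⟨h, -⟩; exacts [h rfl, G.irrefl h]⟩

theorem portSwap_involutive : Function.Involutive (portSwap (V := V)) := fun p =>
  Prod.ext rfl (by simp only [portSwap, add_assoc]; exact add_eq_left.2 (by decide))

theorem colorSplit_adj_portSwap (p : V × Fin 2) : (colorSplit G c).Adj p (portSwap p) :=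
  Or.inl ⟨rfl, (fin_two_add_one_ne_self p.2).symm⟩

theorem colorSplit_adj_of_adj {x y : V} (h : G.Adj x y) :
    (colorSplit G c).Adj (x, c s(x, y)) (y, c s(x, y)) :=
  Or.inr ⟨h, rfl, rfl⟩

theorem not_isAltCycle_colorSplit (hno : ∀ (v : V) (w : G.Walk v v), ¬ G.IsAlternatingCycle c w)
    (C : List (V × Fin 2)) : ¬ (colorSplit G c).IsAltCycle portSwap C := by
  intro hC
  have : NeZero C.length := ⟨by have := hC.2.1; omega⟩
  have hstep : ∀ j, G.Adj (C.get j).1 (C.get (j + 1)).1 ∧ (C.get (j + 1)).2 = (C.get j).2 + 1 ∧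
      c s((C.get j).1, (C.get (j + 1)).1) = (C.get j).2 + 1 := by
    intro j
    rcases hC.adj_get j with ⟨h₁, h₂⟩ | ⟨h₁, h₂, h₃⟩
    -- a matching edge would lead straight back to `C.get j`
    · have hsame : C.get (j + 1) = C.get j := Prod.ext h₁.symm
        ((fin_two_eq_or_eq_add_one _ _).resolve_right (Ne.symm h₂))
      have := hC.1.get_injective hsame
      rw [add_eq_left, Fin.one_eq_zero_iff] at this
      have := hC.2.1
      omega
    · exact ⟨h₁, h₂.symm, h₃⟩
  have hinj : Function.Injective fun j => (C.get j).1 := by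
    intro i j hij
    rcases fin_two_eq_or_eq_add_one (C.get j).2 (C.get i).2 with h | h
    · exact hC.1.get_injective (Prod.ext hij h)
    · exact absurd (show C.get i = portSwap (C.get j) from Prod.ext hij h) (hC.1.get_ne_partner i j)
  obtain ⟨v, w, hw⟩ := exists_isAlternatingCycle_of_fin (G := G) (c := c) _ hinj
    (fun j => (hstep j).1) fun j => by
      rw [(hstep j).2.2, (hstep (j + 1)).2.2, (hstep j).2.1]
      exact (fin_two_add_one_ne_self _).symm
  exact hno v w hw

theorem eq_color_of_isBridge_colorSplit {z : V × Fin 2}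
    (hz : (colorSplit G c).IsBridge s(z, portSwap z)) (u u' : {x : V | x ≠ z.1})
    (hu : G.Adj z.1 u.1) (hu' : G.Adj z.1 u'.1)
    (hreach : (G.induce {x : V | x ≠ z.1}).Reachable u u') :
    c s(z.1, u.1) = c s(z.1, u'.1) := by
  set D := (colorSplit G c).deleteEdges {s(z, portSwap z)}
  have hD : ∀ {p q}, (colorSplit G c).Adj p q → p.1 ≠ z.1 ∨ q.1 ≠ z.1 → D.Adj p q := by
    intro p q hpq hne
    rw [deleteEdges_adj, Set.mem_singleton_iff]
    refine ⟨hpq, fun h => ?_⟩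
    rcases Sym2.eq_iff.1 h with ⟨rfl, rfl⟩ | ⟨rfl, rfl⟩ <;> simp [portSwap] at hne
  have hport : ∀ x : {x : V | x ≠ z.1}, ∀ i j, D.Reachable (x.1, i) (x.1, j) := by
    intro x i j
    rcases fin_two_eq_or_eq_add_one i j with rfl | rfl
    · rfl
    · exact (hD (colorSplit_adj_portSwap (x.1, i)) (Or.inl x.2)).reachable
  have hlift : D.Reachable (u.1, 0) (u'.1, 0) := hreach.map_of_forall_adj fun a b hab =>
    (hport a 0 _).trans <|
      (hD (colorSplit_adj_of_adj hab) (Or.inl a.2)).reachable.trans (hport b _ 0)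
  have hv : D.Reachable (z.1, c s(z.1, u.1)) (z.1, c s(z.1, u'.1)) :=
    (hD (colorSplit_adj_of_adj hu) (Or.inr u.2)).reachable.trans <| (hport u _ 0).trans <|
      hlift.trans <|
        (hport u' 0 _).trans (hD (colorSplit_adj_of_adj hu') (Or.inr u'.2)).symm.reachable
  by_contra hne
  rw [isBridge_iff] at hz
  rcases fin_two_eq_or_eq_add_one z.2 (c s(z.1, u.1)) with ha | ha <;>
    rcases fin_two_eq_or_eq_add_one z.2 (c s(z.1, u'.1)) with hb | hb
  · exact hne (ha.trans hb.symm)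
  · rw [ha, hb] at hv
    exact hz hv
  · rw [ha, hb] at hv
    exact hz hv.symm
  · exact hne (ha.trans hb.symm)

end ColorSplit

end SimpleGraph

/-- **Yeo's theorem for two colors (Grossman--Haggkvist).** If the edges of a finite simple graph `G` (with at least one vertex)
are colored so that `G` has no alternating cycle, then there is a vertex `v` such that every
connected component of `G - v` is joined to `v` by edges of one color only. -/
theorem yeo_two_colors {V : Type*} [Fintype V] [Nonempty V] (G : SimpleGraph V) (c : Sym2 V → Fin 2)
    (hno : ∀ (v : V) (w : G.Walk v v), ¬ G.IsAlternatingCycle c w) :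
    ∃ v : V, ∀ u u' : {x : V | x ≠ v}, G.Adj v u.1 → G.Adj v u'.1 →
      (G.induce {x : V | x ≠ v}).Reachable u u' → c s(v, u.1) = c s(v, u'.1) := by
  obtain ⟨z, -, hz⟩ := SimpleGraph.exists_isBridge_of_forall_not_isAltCycle
    SimpleGraph.portSwap_involutive (fun p _ _ => SimpleGraph.colorSplit_adj_portSwap p)
    (SimpleGraph.not_isAltCycle_colorSplit hno)
    (SimpleGraph.colorSplit_adj_portSwap (G := G) (c := c) (Classical.arbitrary V, 0))
  exact ⟨z.1, SimpleGraph.eq_color_of_isBridge_colorSplit hz⟩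
end

section
/- Let G be a finite simple graph with a unique perfect matching M, and let e be a bridge of G with e ∉ M. Then for each of the two connected components H of G − e, the set of edges of M contained in H is the unique perfect matching of H. -/
/-- `M` is a perfect matching of `G`, viewed as a set of edges: every edge of `M`
is an edge of `G`, and every vertex of `G` is incident to exactly one edge of `M`. -/
def SimpleGraph.IsPerfectMatchingOn {V : Type*} (G : SimpleGraph V) (M : Set (Sym2 V)) : Prop :=
  M ⊆ G.edgeSet ∧ ∀ v : V, ∃! e, e ∈ M ∧ v ∈ e

/-- Let `G` be a finite simple graph with unique perfect matching `M` and let `e` be a bridge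
of `G` with `e ∉ M`. Then for every connected component of `G - e` (viewed as the induced
subgraph on its vertex set), the set of edges of `M` contained in that component is its unique
perfect matching. -/
theorem component_unique_matching {V : Type*} [Fintype V] (G : SimpleGraph V)
    (M : Set (Sym2 V)) (hM : G.IsPerfectMatchingOn M)
    (huniq : ∀ M' : Set (Sym2 V), G.IsPerfectMatchingOn M' → M' = M)
    (e : Sym2 V) (he : G.IsBridge e) (heM : e ∉ M)
    (C : (G.deleteEdges {e}).ConnectedComponent) :
    ((G.deleteEdges {e}).induce C.supp).IsPerfectMatchingOn
        (Sym2.map (fun x : C.supp => (x : V)) ⁻¹' M) ∧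
      ∀ M' : Set (Sym2 C.supp),
        ((G.deleteEdges {e}).induce C.supp).IsPerfectMatchingOn M' →
          M' = Sym2.map (fun x : C.supp => (x : V)) ⁻¹' M := by
  classical
  have hMG' : M ⊆ (G.deleteEdges {e}).edgeSet := by
    intro f hf
    rw [SimpleGraph.edgeSet_deleteEdges]
    exact ⟨hM.1 hf, fun hfe => heM (by rwa [Set.mem_singleton_iff.mp hfe] at hf)⟩
  have hcomp : ∀ a b : V, s(a, b) ∈ M → a ∈ C.supp → b ∈ C.supp := by
    intro a b hab ha
    have hadj : (G.deleteEdges {e}).Adj a b := hMG' hab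
    rw [SimpleGraph.ConnectedComponent.mem_supp_iff] at ha ⊢
    rw [← ha]
    exact SimpleGraph.ConnectedComponent.sound hadj.symm.reachable
  have hinj : Function.Injective (fun x : C.supp => (x : V)) := Subtype.val_injective
  have hmapinj := Sym2.map.injective hinj
  -- the restricted matching is a perfect matching of the component
  have hpm : ((G.deleteEdges {e}).induce C.supp).IsPerfectMatchingOn
      (Sym2.map (fun x : C.supp => (x : V)) ⁻¹' M) := by
    constructor
    · intro f hf
      induction f using Sym2.ind with
      | _ a b =>
        have hab : s((a : V), (b : V)) ∈ M := hf
        have hadj : (G.deleteEdges {e}).Adj (a : V) (b : V) :=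
          (SimpleGraph.mem_edgeSet _).mp (hMG' hab)
        exact (SimpleGraph.mem_edgeSet _).mpr hadj
    · intro v
      obtain ⟨f, ⟨hfM, hvf⟩, hfu⟩ := hM.2 (v : V)
      obtain ⟨w, hws⟩ : ∃ w : V, s((v : V), w) = f := ⟨_, Sym2.other_spec hvf⟩
      have hwM : s((v : V), w) ∈ M := by rwa [hws]
      have hwC : w ∈ C.supp := hcomp _ _ hwM v.2
      refine ⟨s(v, ⟨w, hwC⟩), ⟨?_, ?_⟩, ?_⟩
      · show Sym2.map _ s(v, ⟨w, hwC⟩) ∈ M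
        simpa using hwM
      · exact Sym2.mem_mk_left _ _
      · rintro g ⟨hgM, hvg⟩
        have h1 : Sym2.map (fun x : C.supp => (x : V)) g = f := by
          refine hfu _ ⟨hgM, ?_⟩
          exact Sym2.mem_map.mpr ⟨v, hvg, rfl⟩
        apply hmapinj
        rw [h1, ← hws]
        simp
  refine ⟨hpm, ?_⟩
  intro M' hM'
  -- extend M' to a perfect matching of G
  set M'' : Set (Sym2 V) :=
    (Sym2.map (fun x : C.supp => (x : V)) '' M') ∪
      {f | f ∈ M ∧ ∀ u : V, u ∈ f → u ∉ C.supp} with hM''def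
  have hM''edges : M'' ⊆ G.edgeSet := by
    rintro f (⟨g, hg, rfl⟩ | ⟨hfM, -⟩)
    · induction g using Sym2.ind with
      | _ a b =>
        have hadj : ((G.deleteEdges {e}).induce C.supp).Adj a b :=
          (SimpleGraph.mem_edgeSet _).mp (hM'.1 hg)
        have hadj' : (G.deleteEdges {e}).Adj (a : V) (b : V) := hadj
        exact (SimpleGraph.mem_edgeSet _).mpr (hadj'.1 : G.Adj _ _)
    · exact hM.1 hfM
  have hmemC : ∀ (g : Sym2 C.supp) (u : V),
      u ∈ Sym2.map (fun x : C.supp => (x : V)) g → u ∈ C.supp := by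
    intro g u hu
    obtain ⟨x, -, rfl⟩ := Sym2.mem_map.mp hu
    exact x.2
  have hM''pm : G.IsPerfectMatchingOn M'' := by
    refine ⟨hM''edges, ?_⟩
    intro v
    by_cases hv : v ∈ C.supp
    · obtain ⟨g, ⟨hgM', hvg⟩, hgu⟩ := hM'.2 ⟨v, hv⟩
      refine ⟨Sym2.map (fun x : C.supp => (x : V)) g,
        ⟨Or.inl ⟨g, hgM', rfl⟩, Sym2.mem_map.mpr ⟨⟨v, hv⟩, hvg, rfl⟩⟩, ?_⟩
      rintro f ⟨(⟨g', hg', rfl⟩ | ⟨-, hfc⟩), hvf⟩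
      · obtain ⟨x, hx, hxv⟩ := Sym2.mem_map.mp hvf
        have hxeq : x = ⟨v, hv⟩ := Subtype.ext hxv
        rw [hgu g' ⟨hg', hxeq ▸ hx⟩]
      · exact absurd hv (hfc v hvf)
    · obtain ⟨f, ⟨hfM, hvf⟩, hfu⟩ := hM.2 v
      have hfc : ∀ u : V, u ∈ f → u ∉ C.supp := by
        obtain ⟨w, hws⟩ : ∃ w : V, s(v, w) = f := ⟨_, Sym2.other_spec hvf⟩
        have hwC : w ∉ C.supp := fun hwC =>
          hv (hcomp w v (by rw [Sym2.eq_swap, hws]; exact hfM) hwC)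
        intro u hu
        rw [← hws] at hu
        rcases Sym2.mem_iff.mp hu with rfl | rfl
        · exact hv
        · exact hwC
      refine ⟨f, ⟨Or.inr ⟨hfM, hfc⟩, hvf⟩, ?_⟩
      rintro f' ⟨(⟨g', hg', rfl⟩ | ⟨hf'M, -⟩), hvf'⟩
      · exact absurd (hmemC g' v hvf') hv
      · exact hfu f' ⟨hf'M, hvf'⟩
  have hMeq : M'' = M := huniq M'' hM''pm
  ext g
  constructor
  · intro hg
    have : Sym2.map (fun x : C.supp => (x : V)) g ∈ M'' := Or.inl ⟨g, hg, rfl⟩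
    rw [hMeq] at this
    exact this
  · intro hg
    induction g using Sym2.ind with
    | _ a b =>
      have hab : s((a : V), (b : V)) ∈ M := hg
      obtain ⟨g', ⟨hg'M', hag'⟩, -⟩ := hM'.2 a
      have hg'M : Sym2.map (fun x : C.supp => (x : V)) g' ∈ M := by
        rw [← hMeq]; exact Or.inl ⟨g', hg'M', rfl⟩
      obtain ⟨f, -, hfu⟩ := hM.2 (a : V)
      have h1 : Sym2.map (fun x : C.supp => (x : V)) g' = f :=
        hfu _ ⟨hg'M, Sym2.mem_map.mpr ⟨a, hag', rfl⟩⟩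
      have h2 : s((a : V), (b : V)) = f := hfu _ ⟨hab, Sym2.mem_mk_left _ _⟩
      have : g' = s(a, b) := by
        apply hmapinj
        rw [h1, ← h2]
        simp
      rwa [← this]
end
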